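/- arXiv:2509.18057 — 2 statements merged into one kernel-verified Lean document; each statement's English description precedes it below -/
import Mathlib

section
/- Let G be a d-regular graph on n vertices whose adjacency matrix A satisfies λ*(G) ≤ λ, and let S be an independent set in G with |S| = αn. Then α ≤ λ/(d+λ) (Hoffman's bound). -/
/-!
Let `s` be the indicator vector of `S` and `x = s - α • 1`. Since `|S| = α n`, `x` is orthogonal
to the all-ones eigenvector, and diagonalising `A` on the invariant subspace `1ᗮ` gives
`xᵀ A x ≥ -λ ‖x‖²`. Independence means `sᵀ A s = 0`, so regularity gives `xᵀ A x = -α² d n`,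
while `‖x‖² = α n (1 - α)`; hence `α d ≤ λ (1 - α)`. The bound `λ ≥ 0` holds because for
`n ≥ 2` the subspace `1ᗮ` is nontrivial and so contains an eigenvector.
-/

open Finset Matrix Module RealInnerProductSpace

theorem Module.End.HasEigenvalue.exists_hasEigenvector_of_restrict {R M : Type*} [CommRing R]
    [AddCommGroup M] [Module R M] {f : End R M} {p : Submodule R M} {hp : ∀ x ∈ p, f x ∈ p}
    {μ : R} (h : End.HasEigenvalue (f.restrict hp) μ) : ∃ v ∈ p, f.HasEigenvector μ v := by
  obtain ⟨⟨v, hvp⟩, hv⟩ := h.exists_hasEigenvector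
  refine ⟨v, hvp, ?_, ?_⟩
  · rw [End.mem_eigenspace_iff]
    exact congrArg Subtype.val hv.apply_eq_smul
  · simpa using hv.2

namespace LinearMap.IsSymmetric

variable {E : Type*} [NormedAddCommGroup E] [InnerProductSpace ℝ E] {T : E →ₗ[ℝ] E} {u : E}
  {d : ℝ}

theorem mapsTo_orthogonal_span_singleton (hT : T.IsSymmetric) (hu : T u = d • u) :
    ∀ v ∈ (ℝ ∙ u)ᗮ, T v ∈ (ℝ ∙ u)ᗮ := by
  intro v hv
  rw [Submodule.mem_orthogonal_singleton_iff_inner_right] at hv ⊢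
  rw [← hT, hu, inner_smul_left, hv, mul_zero]

variable [FiniteDimensional ℝ E]

theorem mul_norm_sq_le_inner_map_self (hT : T.IsSymmetric) {c : ℝ}
    (hc : ∀ μ, End.HasEigenvalue T μ → c ≤ μ) (x : E) : c * ‖x‖ ^ 2 ≤ ⟪x, T x⟫ := by
  have h_inner :
      ⟪x, T x⟫ = ∑ i, hT.eigenvalues rfl i * (hT.eigenvectorBasis rfl).repr x i ^ 2 := by
    rw [← (hT.eigenvectorBasis rfl).repr.inner_map_map, PiLp.inner_apply]
    refine Finset.sum_congr rfl fun i _ => ?_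
    rw [hT.eigenvectorBasis_apply_self_apply]
    simp only [RCLike.inner_apply, conj_trivial, RCLike.ofReal_real_eq_id, id_eq]
    ring
  have h_norm : ‖x‖ ^ 2 = ∑ i, (hT.eigenvectorBasis rfl).repr x i ^ 2 := by
    rw [← (hT.eigenvectorBasis rfl).repr.norm_map, EuclideanSpace.norm_sq_eq]
    simp
  rw [h_inner, h_norm, Finset.mul_sum]
  exact Finset.sum_le_sum fun i _ =>
    mul_le_mul_of_nonneg_right (hc _ (hT.hasEigenvalue_eigenvalues rfl i)) (sq_nonneg _)

theorem mul_norm_sq_le_inner_map_self_of_inner_eq_zero (hT : T.IsSymmetric) (hu : T u = d • u)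
    {c : ℝ} (hc : ∀ μ v, v ≠ 0 → ⟪u, v⟫ = 0 → T v = μ • v → c ≤ μ) {x : E} (hx : ⟪u, x⟫ = 0) :
    c * ‖x‖ ^ 2 ≤ ⟪x, T x⟫ := by
  have hW := hT.mapsTo_orthogonal_span_singleton hu
  refine (hT.restrict_invariant hW).mul_norm_sq_le_inner_map_self (fun μ hμ => ?_)
    ⟨x, Submodule.mem_orthogonal_singleton_iff_inner_right.mpr hx⟩
  obtain ⟨v, hvW, hv⟩ := hμ.exists_hasEigenvector_of_restrict
  exact hc μ v hv.2 (Submodule.mem_orthogonal_singleton_iff_inner_right.mp hvW) hv.apply_eq_smul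

theorem exists_eigenvector_inner_eq_zero (hT : T.IsSymmetric) (hu : T u = d • u)
    (hE : 2 ≤ finrank ℝ E) : ∃ (μ : ℝ) (v : E), v ≠ 0 ∧ ⟪u, v⟫ = 0 ∧ T v = μ • v := by
  have hW := hT.mapsTo_orthogonal_span_singleton hu
  have : Nontrivial (ℝ ∙ u)ᗮ := by
    rw [← Module.finrank_pos_iff (R := ℝ)]
    have := Submodule.finrank_add_finrank_orthogonal (ℝ ∙ u)
    have : finrank ℝ (ℝ ∙ u) ≤ 1 := by simpa using finrank_span_le_card ({u} : Set E)
    omega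
  obtain ⟨v, hvW, hv⟩ := (hT.restrict_invariant hW).hasEigenvalue_iSup_of_finiteDimensional
    |>.exists_hasEigenvector_of_restrict
  exact ⟨_, v, hv.2, Submodule.mem_orthogonal_singleton_iff_inner_right.mp hvW, hv.apply_eq_smul⟩

end LinearMap.IsSymmetric

namespace Matrix.IsSymm

variable {ι : Type*} [Fintype ι] [DecidableEq ι] {A : Matrix ι ι ℝ} {u : ι → ℝ} {d : ℝ}

theorem isSymmetric_toEuclideanLin (hA : A.IsSymm) : A.toEuclideanLin.IsSymmetric :=
  isSymmetric_toEuclideanLin_iff.mpr (isHermitian_iff_isSymm.mpr hA)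

theorem toEuclideanLin_toLp_eq_smul (hu : A *ᵥ u = d • u) :
    A.toEuclideanLin (WithLp.toLp 2 u) = d • WithLp.toLp 2 u := by
  rw [toEuclideanLin, toLpLin_toLp, toLin'_apply, hu, WithLp.toLp_smul]

theorem mul_dotProduct_self_le_dotProduct_mulVec (hA : A.IsSymm) (hu : A *ᵥ u = d • u) {c : ℝ}
    (hc : ∀ μ v, v ≠ 0 → v ⬝ᵥ u = 0 → A *ᵥ v = μ • v → c ≤ μ) {x : ι → ℝ} (hx : x ⬝ᵥ u = 0) :
    c * (x ⬝ᵥ x) ≤ x ⬝ᵥ A *ᵥ x := by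
  have key := hA.isSymmetric_toEuclideanLin.mul_norm_sq_le_inner_map_self_of_inner_eq_zero
    (toEuclideanLin_toLp_eq_smul hu) (c := c) (x := WithLp.toLp 2 x) ?_ ?_
  · rwa [← real_inner_self_eq_norm_sq, toEuclideanLin, toLpLin_toLp,
      EuclideanSpace.inner_toLp_toLp, EuclideanSpace.inner_toLp_toLp, toLin'_apply,
      dotProduct_comm (A *ᵥ x)] at key
  · intro μ v hv hvu hAv
    refine hc μ (WithLp.ofLp v) (by simpa using hv) ?_ ?_
    · simpa [EuclideanSpace.inner_eq_star_dotProduct] using hvu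
    · simpa [toEuclideanLin, ofLp_toLpLin] using congrArg WithLp.ofLp hAv
  · simpa [EuclideanSpace.inner_toLp_toLp, dotProduct_comm] using hx

theorem exists_eigenvector_dotProduct_eq_zero (hA : A.IsSymm) (hu : A *ᵥ u = d • u)
    (hι : 2 ≤ Fintype.card ι) : ∃ (μ : ℝ) (v : ι → ℝ), v ≠ 0 ∧ v ⬝ᵥ u = 0 ∧ A *ᵥ v = μ • v := by
  obtain ⟨μ, v, hv, hvu, hAv⟩ :=
    hA.isSymmetric_toEuclideanLin.exists_eigenvector_inner_eq_zero
      (toEuclideanLin_toLp_eq_smul hu) (by simpa using hι)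
  refine ⟨μ, WithLp.ofLp v, by simpa using hv, ?_, ?_⟩
  · simpa [EuclideanSpace.inner_eq_star_dotProduct] using hvu
  · simpa [toEuclideanLin, ofLp_toLpLin] using congrArg WithLp.ofLp hAv

end Matrix.IsSymm

section QuadraticForm

variable {ι R : Type*} [Fintype ι] [CommRing R]

theorem sub_smul_one_dotProduct_self (y : ι → R) (a : R) :
    (y - a • 1) ⬝ᵥ (y - a • 1) = y ⬝ᵥ y - 2 * a * (y ⬝ᵥ 1) + a ^ 2 * Fintype.card ι := by
  simp only [sub_dotProduct, dotProduct_sub, smul_dotProduct, dotProduct_smul,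
    one_dotProduct_one, dotProduct_comm 1 y, smul_eq_mul]
  ring

theorem Matrix.IsSymm.sub_smul_one_dotProduct_mulVec {A : Matrix ι ι R} {d : R} (hA : A.IsSymm)
    (hreg : A *ᵥ 1 = d • 1) (y : ι → R) (a : R) :
    (y - a • 1) ⬝ᵥ A *ᵥ (y - a • 1) =
      y ⬝ᵥ A *ᵥ y - 2 * a * d * (y ⬝ᵥ 1) + a ^ 2 * d * Fintype.card ι := by
  have h_one : (1 : ι → R) ⬝ᵥ A *ᵥ y = d * (y ⬝ᵥ 1) := by
    rw [dotProduct_mulVec, ← mulVec_transpose, hA.eq, hreg, smul_dotProduct, dotProduct_comm,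
      smul_eq_mul]
  simp only [mulVec_sub, mulVec_smul, hreg, sub_dotProduct, dotProduct_sub, smul_dotProduct,
    dotProduct_smul, h_one, one_dotProduct_one, smul_eq_mul]
  ring

variable (S : Finset ι)

theorem indicator_one_dotProduct_one : (S : Set ι).indicator 1 ⬝ᵥ (1 : ι → R) = #S := by
  classical
  simp [dotProduct_one, Set.indicator_apply]

theorem indicator_one_dotProduct_self :
    (S : Set ι).indicator 1 ⬝ᵥ (S : Set ι).indicator (1 : ι → R) = #S := by
  classical
  simp [dotProduct, Set.indicator_apply]

theorem indicator_one_dotProduct_mulVec_indicator_one {A : Matrix ι ι R}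
    (hS : ∀ i ∈ S, ∀ j ∈ S, A i j = 0) :
    (S : Set ι).indicator 1 ⬝ᵥ A *ᵥ (S : Set ι).indicator (1 : ι → R) = 0 := by
  classical
  refine Finset.sum_eq_zero fun i _ => ?_
  by_cases hi : i ∈ S
  · simpa [hi, mulVec, dotProduct, Set.indicator_apply] using Finset.sum_eq_zero (hS i hi)
  · simp [hi]

end QuadraticForm

theorem le_div_add_of_sq_mul_le {α d lam : ℝ} (hα : 0 ≤ α) (hd : 0 < d) (hlam : 0 ≤ lam)
    (h : α ^ 2 * d ≤ lam * (α * (1 - α))) : α ≤ lam / (d + lam) := by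
  rw [le_div_iff₀ (by positivity)]
  rcases hα.eq_or_lt with rfl | hα
  · simpa using hlam
  · nlinarith

theorem stmt3_general (n d : ℕ) (hn : 2 ≤ n) (hd : 1 ≤ d)
    (A : Matrix (Fin n) (Fin n) ℝ)
    (hsymm : A.IsSymm)
    (hreg : A.mulVec (fun _ => 1) = fun _ => (d : ℝ))
    (lam : ℝ)
    (hspec : ∀ (μ : ℝ) (v : Fin n → ℝ), v ≠ 0 →
      dotProduct v (fun _ => (1 : ℝ)) = 0 →
      A.mulVec v = μ • v → |μ| ≤ lam)
    (S : Finset (Fin n))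
    (hind : ∀ i ∈ S, ∀ j ∈ S, A i j = 0)
    (α : ℝ) (hα : (S.card : ℝ) = α * n) :
    α ≤ lam / (d + lam) := by
  have hreg' : A *ᵥ 1 = (d : ℝ) • 1 := by
    rw [Pi.one_def, hreg]
    ext
    simp
  have hn0 : (0 : ℝ) < n := by positivity
  have hlam : 0 ≤ lam := by
    obtain ⟨μ, v, hv, hv1, hAv⟩ :=
      hsymm.exists_eigenvector_dotProduct_eq_zero hreg' (by simpa using hn)
    exact (abs_nonneg μ).trans (hspec μ v hv hv1 hAv)
  set s := (S : Set (Fin n)).indicator (1 : Fin n → ℝ)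
  have hx1 : (s - α • 1) ⬝ᵥ 1 = 0 := by
    simp [sub_dotProduct, s, indicator_one_dotProduct_one, hα]
  have hquad := hsymm.mul_dotProduct_self_le_dotProduct_mulVec hreg' (c := -lam)
    (fun μ v hv hv1 hAv => neg_le_of_abs_le (hspec μ v hv hv1 hAv)) hx1
  rw [sub_smul_one_dotProduct_self, hsymm.sub_smul_one_dotProduct_mulVec hreg',
    indicator_one_dotProduct_mulVec_indicator_one S hind, indicator_one_dotProduct_self,
    indicator_one_dotProduct_one, hα, Fintype.card_fin] at hquad
  refine le_div_add_of_sq_mul_le ?_ (by exact_mod_cast hd) hlam ?_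
  · exact nonneg_of_mul_nonneg_left (hα ▸ Nat.cast_nonneg _) hn0
  · exact le_of_mul_le_mul_right (by linear_combination hquad) hn0

/-- Hoffman's bound: if `G` is a `d`-regular graph on `n` vertices whose
nontrivial eigenvalues are bounded in absolute value by `lam`, and `S` is an
independent set with `|S| = α·n`, then `α ≤ lam/(d+lam)`. -/
theorem stmt3 (n d : ℕ) (hn : 2 ≤ n) (hd : 1 ≤ d)
    (A : Matrix (Fin n) (Fin n) ℝ)
    (hsymm : A.IsSymm)
    (h01 : ∀ i j, A i j = 0 ∨ A i j = 1)
    (hdiag : ∀ i, A i i = 0)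
    (hreg : A.mulVec (fun _ => 1) = fun _ => (d : ℝ))
    (lam : ℝ)
    (hspec : ∀ (μ : ℝ) (v : Fin n → ℝ), v ≠ 0 →
      dotProduct v (fun _ => (1 : ℝ)) = 0 →
      A.mulVec v = μ • v → |μ| ≤ lam)
    (S : Finset (Fin n))
    (hind : ∀ i ∈ S, ∀ j ∈ S, A i j = 0)
    (α : ℝ) (hα : (S.card : ℝ) = α * n) :
    α ≤ lam / (d + lam) :=
  stmt3_general n d hn hd A hsymm hreg lam hspec S hind α hα
end

section
/- Let G be a d-regular graph on n vertices with λ*(G) ≤ λ. Then every cut (S, S̄) of G crosses at most (1/2 + λ/(2d)) fraction of the edges; i.e., MC(G) ≤ 1/2 + λ/(2d). -/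
/-!
Let `x` be the `±1` vector of the cut `S`; then `2|δ(S, Sᶜ)| = n d - xᵀ A x`. Split
`x = c 𝟙 + y` with `y ⊥ 𝟙`. Since `𝟙` is a `d`-eigenvector of the symmetric matrix `A`, the cross
terms vanish and `xᵀ A x = c² d ‖𝟙‖² + yᵀ A y`. The hyperplane `𝟙⊥` is `A`-invariant and all
eigenvalues of `A` on it have absolute value at most `λ`, so the spectral theorem gives
`yᵀ A y ≥ -λ ‖y‖²`; in particular `λ ≥ 0` once `n ≥ 2`. Hence `xᵀ A x ≥ -λ ‖x‖² = -λ n`.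
-/

open scoped RealInnerProductSpace
open Module
open scoped Matrix

variable {E : Type*} [NormedAddCommGroup E] [InnerProductSpace ℝ E]

theorem exists_ne_zero_inner_eq_zero [FiniteDimensional ℝ E] (hE : 1 < finrank ℝ E) (u : E) :
    ∃ v : E, v ≠ 0 ∧ ⟪v, u⟫ = 0 := by
  have hsum := (ℝ ∙ u).finrank_add_finrank_orthogonal
  have hspan : finrank ℝ (ℝ ∙ u) ≤ 1 := by
    simpa using finrank_span_le_card (R := ℝ) ({u} : Set E)
  obtain ⟨v, hv, hv0⟩ := Submodule.exists_mem_ne_zero_of_ne_bot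
    (Submodule.one_le_finrank_iff.mp (by omega : 1 ≤ finrank ℝ (ℝ ∙ u)ᗮ))
  exact ⟨v, hv0, Submodule.mem_orthogonal_singleton_iff_inner_left.mp hv⟩

namespace LinearMap.IsSymmetric

variable {T : E →ₗ[ℝ] E}

theorem abs_inner_map_self_le [FiniteDimensional ℝ E] (hT : T.IsSymmetric) {lam : ℝ}
    (hlam : ∀ (μ : ℝ) (v : E), v ≠ 0 → T v = μ • v → |μ| ≤ lam) (x : E) :
    |⟪T x, x⟫| ≤ lam * ‖x‖ ^ 2 := by
  let b := hT.eigenvectorBasis rfl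
  let μ := hT.eigenvalues rfl
  have hμ (i) : |μ i| ≤ lam :=
    hlam _ _ (b.orthonormal.ne_zero i) (hT.apply_eigenvectorBasis rfl i)
  have hdiag : ⟪T x, x⟫ = ∑ i, μ i * ⟪b i, x⟫ ^ 2 := by
    rw [← b.sum_inner_mul_inner]
    refine Finset.sum_congr rfl fun i _ => ?_
    rw [hT, hT.apply_eigenvectorBasis rfl i, real_inner_smul_right, real_inner_comm x,
      RCLike.ofReal_real_eq_id, id_eq, sq, mul_assoc]
  rw [hdiag, ← b.sum_sq_inner_right, Finset.mul_sum]
  refine (Finset.abs_sum_le_sum_abs _ _).trans (Finset.sum_le_sum fun i _ => ?_)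
  rw [abs_mul, abs_sq]
  exact mul_le_mul_of_nonneg_right (hμ i) (sq_nonneg _)

theorem abs_inner_map_self_le_of_inner_eq_zero [FiniteDimensional ℝ E] (hT : T.IsSymmetric)
    {u : E} {c lam : ℝ} (hu : T u = c • u)
    (hlam : ∀ (μ : ℝ) (v : E), v ≠ 0 → ⟪v, u⟫ = 0 → T v = μ • v → |μ| ≤ lam)
    {x : E} (hx : ⟪x, u⟫ = 0) :
    |⟪T x, x⟫| ≤ lam * ‖x‖ ^ 2 := by
  -- `u⊥` is `T`-invariant, so the previous bound applies to the restriction of `T` to it.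
  have hinv : ∀ v ∈ (ℝ ∙ u)ᗮ, T v ∈ (ℝ ∙ u)ᗮ := by
    simp only [Submodule.mem_orthogonal_singleton_iff_inner_left]
    intro v hv
    rw [hT, hu, inner_smul_right, hv, mul_zero]
  have hrestrict := (hT.restrict_invariant hinv).abs_inner_map_self_le
    (lam := lam) (fun μ v hv hTv => hlam μ v (by simpa using hv)
      (Submodule.mem_orthogonal_singleton_iff_inner_left.mp v.2)
      (by simpa using congrArg Subtype.val hTv))
    ⟨x, Submodule.mem_orthogonal_singleton_iff_inner_left.mpr hx⟩
  simpa using hrestrict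

theorem neg_mul_norm_sq_le_inner_map_self_of_perp (hT : T.IsSymmetric) {u : E} {c lam : ℝ}
    (hu : T u = c • u) (hc : -lam ≤ c)
    (hperp : ∀ y : E, ⟪y, u⟫ = 0 → |⟪T y, y⟫| ≤ lam * ‖y‖ ^ 2) (x : E) :
    -lam * ‖x‖ ^ 2 ≤ ⟪T x, x⟫ := by
  obtain ⟨p, hp, y, hy, rfl⟩ := (ℝ ∙ u).exists_add_mem_mem_orthogonal x
  obtain ⟨a, rfl⟩ := Submodule.mem_span_singleton.mp hp
  have hyu : ⟪y, u⟫ = 0 := Submodule.mem_orthogonal_singleton_iff_inner_left.mp hy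
  generalize hp' : a • u = p
  have hTp : T p = c • p := by rw [← hp', map_smul, hu, smul_comm]
  have hyp : ⟪y, p⟫ = 0 := by rw [← hp', real_inner_smul_right, hyu, mul_zero]
  have hpy : ⟪p, y⟫ = 0 := by rw [real_inner_comm, hyp]
  have hquad : ⟪T (p + y), p + y⟫ = c * ‖p‖ ^ 2 + ⟪T y, y⟫ := by
    simp only [map_add, hTp, inner_add_left, inner_add_right, hT y p, real_inner_smul_left,
      real_inner_smul_right, hpy, hyp, real_inner_self_eq_norm_sq]
    ring
  have hnorm : ‖p + y‖ ^ 2 = ‖p‖ ^ 2 + ‖y‖ ^ 2 := by rw [norm_add_sq_real, hpy]; ring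
  have hy_bound := neg_le_of_abs_le (hperp y hyu)
  rw [hquad, hnorm]
  nlinarith [sq_nonneg ‖p‖]

theorem neg_mul_norm_sq_le_inner_map_self [FiniteDimensional ℝ E] (hT : T.IsSymmetric)
    (hE : 1 < finrank ℝ E) {u : E} {c lam : ℝ} (hu : T u = c • u) (hc : 0 ≤ c)
    (hlam : ∀ (μ : ℝ) (v : E), v ≠ 0 → ⟪v, u⟫ = 0 → T v = μ • v → |μ| ≤ lam) (x : E) :
    -lam * ‖x‖ ^ 2 ≤ ⟪T x, x⟫ := by
  have hperp (y : E) (hy : ⟪y, u⟫ = 0) := hT.abs_inner_map_self_le_of_inner_eq_zero hu hlam hy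
  obtain ⟨v, hv0, hvu⟩ := exists_ne_zero_inner_eq_zero hE u
  have hlam0 : 0 ≤ lam :=
    nonneg_of_mul_nonneg_left ((abs_nonneg _).trans (hperp v hvu)) (by positivity)
  exact hT.neg_mul_norm_sq_le_inner_map_self_of_perp hu (by linarith) hperp x

end LinearMap.IsSymmetric

namespace Matrix

variable {ι : Type*} [Fintype ι] [DecidableEq ι]

theorem IsSymm.neg_mul_dotProduct_self_le {A : Matrix ι ι ℝ} (hA : A.IsSymm)
    (hι : 1 < Fintype.card ι) {u : ι → ℝ} {c lam : ℝ} (hu : A *ᵥ u = c • u) (hc : 0 ≤ c)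
    (hspec : ∀ (μ : ℝ) (v : ι → ℝ), v ≠ 0 → v ⬝ᵥ u = 0 → A *ᵥ v = μ • v → |μ| ≤ lam)
    (x : ι → ℝ) :
    -lam * (x ⬝ᵥ x) ≤ x ⬝ᵥ A *ᵥ x := by
  have hT : (toEuclideanLin A).IsSymmetric :=
    isSymmetric_toEuclideanLin_iff.mpr (isHermitian_iff_isSymm.mpr hA)
  have hinner (v w : ι → ℝ) : ⟪WithLp.toLp 2 v, WithLp.toLp 2 w⟫ = v ⬝ᵥ w := by
    rw [EuclideanSpace.inner_toLp_toLp, star_trivial, dotProduct_comm]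
  have hTu : toEuclideanLin A (WithLp.toLp 2 u) = c • WithLp.toLp 2 u := by
    rw [toLpLin_toLp, toLin'_apply, hu, WithLp.toLp_smul]
  have hspecT (μ : ℝ) (v : EuclideanSpace ℝ ι) (hv : v ≠ 0) (hvu : ⟪v, WithLp.toLp 2 u⟫ = 0)
      (hAv : toEuclideanLin A v = μ • v) : |μ| ≤ lam := by
    obtain ⟨v⟩ := v
    refine hspec μ v (by simpa using hv) (by rwa [← hinner]) ?_
    simpa using congrArg WithLp.ofLp hAv
  have hbound := hT.neg_mul_norm_sq_le_inner_map_self (by rwa [finrank_euclideanSpace]) hTu hc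
    hspecT (WithLp.toLp 2 x)
  rwa [← real_inner_self_eq_norm_sq, toLpLin_toLp, toLin'_apply, hinner, hinner,
    dotProduct_comm (A *ᵥ x)] at hbound

end Matrix

variable {ι R : Type*} [Fintype ι] [DecidableEq ι] [CommRing R]

def cutSignVector (S : Finset ι) : ι → R := fun i => if i ∈ S then 1 else -1

theorem cutSignVector_dotProduct_self (S : Finset ι) :
    cutSignVector S ⬝ᵥ cutSignVector S = (Fintype.card ι : R) := by
  have hsq (i : ι) : cutSignVector S i * cutSignVector S i = (1 : R) := by
    unfold cutSignVector; split_ifs <;> simp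
  simp [dotProduct, hsq]

theorem Matrix.two_mul_sum_cut (A : Matrix ι ι R) (S : Finset ι) :
    2 * ∑ i, ∑ j, A i j * (if (i ∈ S) ↔ (j ∈ S) then 0 else 1)
      = ∑ i, ∑ j, A i j - cutSignVector S ⬝ᵥ A *ᵥ cutSignVector S := by
  simp only [dotProduct, Matrix.mulVec, Finset.mul_sum, ← Finset.sum_sub_distrib]
  refine Finset.sum_congr rfl fun i _ => Finset.sum_congr rfl fun j _ => ?_
  by_cases hi : i ∈ S <;> by_cases hj : j ∈ S <;> simp [cutSignVector, hi, hj] <;> ring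

/-- `∑ i, ∑ j, A i j * 1[i ∈ S xor j ∈ S]` is `2|δ(S, Sᶜ)|` and `n * d = 2|E(G)|`, so the
left-hand side is the fraction of edges crossing the cut. -/
theorem stmt4_general (n d : ℕ) (hn : 2 ≤ n)
    (A : Matrix (Fin n) (Fin n) ℝ)
    (hsymm : A.IsSymm)
    (hreg : A.mulVec (fun _ => 1) = fun _ => (d : ℝ))
    (lam : ℝ)
    (hspec : ∀ (μ : ℝ) (v : Fin n → ℝ), v ≠ 0 →
      dotProduct v (fun _ => (1 : ℝ)) = 0 →
      A.mulVec v = μ • v → |μ| ≤ lam) :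
    ∀ S : Finset (Fin n),
      (∑ i, ∑ j, A i j * (if (i ∈ S) ↔ (j ∈ S) then 0 else 1)) / (n * d)
        ≤ 1 / 2 + lam / (2 * d) := by
  intro S
  rcases Nat.eq_zero_or_pos d with rfl | hd
  · norm_num
  have hsum : ∑ i, ∑ j, A i j = n * d := by
    simpa [Matrix.mulVec, dotProduct] using congrArg (fun v => ∑ i, v i) hreg
  have hquad := hsymm.neg_mul_dotProduct_self_le (by rw [Fintype.card_fin]; omega)
    (by rw [hreg]; ext; simp) d.cast_nonneg hspec (cutSignVector S)
  rw [cutSignVector_dotProduct_self, Fintype.card_fin] at hquad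
  have hcut := A.two_mul_sum_cut S
  have hrhs : (1 / 2 + lam / (2 * d)) * (n * d) = (n * d + lam * n) / 2 := by
    field_simp
  rw [div_le_iff₀ (by positivity), hrhs]
  linarith

/-- Spectral bound on Max-Cut: if `G` is a `d`-regular graph on `n` vertices
whose nontrivial eigenvalues are bounded in absolute value by `lam`, then every
cut `(S, S̄)` crosses at most a `1/2 + lam/(2d)` fraction of the edges.  Here
`∑ i ∑ j A i j · 1{i∈S xor j∈S} = 2|δ(S,S̄)|` and `n·d = 2|E(G)|`, so the
left-hand side is the cut fraction. -/
theorem stmt4 (n d : ℕ) (hn : 2 ≤ n) (hd : 1 ≤ d)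
    (A : Matrix (Fin n) (Fin n) ℝ)
    (hsymm : A.IsSymm)
    (h01 : ∀ i j, A i j = 0 ∨ A i j = 1)
    (hdiag : ∀ i, A i i = 0)
    (hreg : A.mulVec (fun _ => 1) = fun _ => (d : ℝ))
    (lam : ℝ)
    (hspec : ∀ (μ : ℝ) (v : Fin n → ℝ), v ≠ 0 →
      dotProduct v (fun _ => (1 : ℝ)) = 0 →
      A.mulVec v = μ • v → |μ| ≤ lam) :
    ∀ S : Finset (Fin n),
      (∑ i, ∑ j, A i j * (if (i ∈ S) ↔ (j ∈ S) then 0 else 1)) / (n * d)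
        ≤ 1 / 2 + lam / (2 * d) :=
  stmt4_general n d hn A hsymm hreg lam hspec
end
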